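/- arXiv:1406.2094 — 4 statements merged into one kernel-verified Lean document; each statement's English description precedes it below -/
import Mathlib

section
/- Let X be a compact Hausdorff space, Y ⊆ X a closed subset, and let p : A → B be a surjective continuous homomorphism of Banach algebras. Then the induced continuous homomorphism C(X,Y;A) → C(X,Y;B), f ↦ p∘f, is surjective. -/
/-!
By the open mapping theorem every `b ∈ B` has a preimage of norm at most `C * ‖b‖`. Such
pointwise lifts, held constant near each point, are glued by a partition of unity (all the
constraints are convex) into a continuous lift of `g` up to an error `‖g‖ / 2`, of norm
`≤ (3/2) C ‖g‖` and vanishing wherever `g` does. Lifting the error again and again, as in the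
proof of the open mapping theorem, the lifts form an absolutely convergent series in the
complete space of `A`-valued functions vanishing on `Y`, whose sum is an exact lift.
-/

open Set Filter Topology Metric

theorem AddMonoidHom.surjective_of_exists_approx_preimage_norm_le
    {E F : Type*} [SeminormedAddCommGroup E] [CompleteSpace E] [NormedAddCommGroup F]
    (T : E →+ F) (hT : Continuous T) {C : ℝ} (hC : 0 ≤ C)
    (h : ∀ y, ∃ x, dist (T x) y ≤ 1 / 2 * ‖y‖ ∧ ‖x‖ ≤ C * ‖y‖) : Function.Surjective T := by
  intro y
  choose L hL using h
  set r : F → F := fun z => z - T (L z)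
  have hr : ∀ n, ‖r^[n] y‖ ≤ (1 / 2) ^ n * ‖y‖ := by
    intro n
    induction n with
    | zero => simp
    | succ n ih =>
      rw [Function.iterate_succ_apply', pow_succ', mul_assoc, ← dist_eq_norm, dist_comm]
      exact (hL _).1.trans (by gcongr)
  set u : ℕ → E := fun n => L (r^[n] y)
  have hu : ∀ n, ‖u n‖ ≤ C * ‖y‖ * (1 / 2) ^ n := fun n =>
    calc ‖u n‖ ≤ C * ‖r^[n] y‖ := (hL _).2
      _ ≤ C * ((1 / 2) ^ n * ‖y‖) := by gcongr; exact hr n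
      _ = C * ‖y‖ * (1 / 2) ^ n := by ring
  have hsum : Summable u := Summable.of_norm_bounded (summable_geometric_two.mul_left _) hu
  have hpartial : ∀ n, T (∑ i ∈ Finset.range n, u i) = y - r^[n] y := by
    intro n
    induction n with
    | zero => simp
    | succ n ih =>
      rw [Finset.sum_range_succ, map_add, ih, Function.iterate_succ_apply']
      exact sub_add _ _ _
  have hres : Tendsto (fun n => r^[n] y) atTop (𝓝 0) := by
    refine squeeze_zero_norm hr ?_
    simpa using (tendsto_pow_atTop_nhds_zero_of_lt_one (by norm_num)
      (by norm_num : (1 / 2 : ℝ) < 1)).mul_const ‖y‖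
  refine ⟨∑' n, u n, tendsto_nhds_unique ((hT.tendsto _).comp hsum.hasSum.tendsto_sum_nat) ?_⟩
  simpa [Function.comp_def, hpartial] using tendsto_const_nhds.sub hres

theorem exists_continuous_approx_lift {X E F : Type*} [TopologicalSpace X] [NormalSpace X]
    [ParacompactSpace X] [NormedAddCommGroup E] [NormedSpace ℝ E] [NormedAddCommGroup F]
    [NormedSpace ℝ F] (P : E →ₗ[ℝ] F) {C : ℝ} (hC : 0 ≤ C)
    (hP : ∀ b, ∃ a, P a = b ∧ ‖a‖ ≤ C * ‖b‖) (g : C(X, F)) {ε : ℝ} (hε : 0 < ε) :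
    ∃ f : C(X, E), ∀ x, (g x = 0 → f x = 0) ∧ ‖f x‖ ≤ C * (‖g x‖ + ε) ∧
      dist (P (f x)) (g x) < ε := by
  refine exists_continuous_forall_mem_convex_of_local_const
    (t := fun x => {a | (g x = 0 → a = 0) ∧ ‖a‖ ≤ C * (‖g x‖ + ε) ∧ dist (P a) (g x) < ε})
    (fun x => ?_) fun x₀ => ?_
  · have hvanish_convex : Convex ℝ {a : E | g x = 0 → a = 0} := fun a ha b hb _ _ _ _ _ h => by
      simp [ha h, hb h]
    have hnorm_convex : Convex ℝ {a : E | ‖a‖ ≤ C * (‖g x‖ + ε)} := by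
      convert convex_closedBall (0 : E) (C * (‖g x‖ + ε)) using 1
      ext; simp
    exact hvanish_convex.inter (hnorm_convex.inter ((convex_ball (g x) ε).linear_preimage P))
  · obtain ⟨a, ha₀, ha⟩ := hP (g x₀)
    -- a controlled lift of `0` is `0`, and near a point where `g ≠ 0` there is nothing to check
    have hvanish : ∀ᶠ x in 𝓝 x₀, g x = 0 → a = 0 := by
      by_cases h₀ : g x₀ = 0
      · exact .of_forall fun _ _ => norm_le_zero_iff.1 (by simpa [h₀] using ha)
      · filter_upwards [g.continuous.continuousAt.eventually_ne h₀] with x hx h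
        exact absurd h hx
    refine ⟨a, ?_⟩
    filter_upwards [hvanish, g.continuous.continuousAt (ball_mem_nhds _ hε)] with x hxa hx
    rw [mem_preimage, mem_ball, dist_comm] at hx
    rw [ha₀]
    exact ⟨hxa, ha.trans (by gcongr; exact norm_le_norm_add_const_of_dist_le hx.le), hx⟩

namespace ContinuousMap

variable {X : Type*} [TopologicalSpace X] (Y : Set X) {E F : Type*}
  [NormedAddCommGroup E] [NormedAddCommGroup F]

variable (E) in
def vanishingOn : AddSubgroup C(X, E) where
  carrier := {f | ∀ y ∈ Y, f y = 0}
  add_mem' hf hg y hy := by simp [hf y hy, hg y hy]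
  zero_mem' _ _ := rfl
  neg_mem' hf y hy := by simp [hf y hy]

variable (E) in
theorem isClosed_vanishingOn : IsClosed (vanishingOn Y E : Set C(X, E)) := by
  show IsClosed {f : C(X, E) | ∀ y ∈ Y, f y = 0}
  simp only [ofPred_forall]
  exact isClosed_biInter fun y _ => isClosed_eq (continuous_eval_const y) continuous_const

variable [NormedSpace ℝ E] [NormedSpace ℝ F]

def vanishingOnCompLeft (P : E →L[ℝ] F) : vanishingOn Y E →+ vanishingOn Y F where
  toFun f := ⟨(P : C(E, F)).comp f, fun y hy => by simp [f.2 y hy]⟩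
  map_zero' := by ext; simp
  map_add' f g := by ext; simp

theorem continuous_vanishingOnCompLeft (P : E →L[ℝ] F) : Continuous (vanishingOnCompLeft Y P) :=
  ((continuous_postcomp _).comp continuous_subtype_val).subtype_mk _

theorem vanishingOnCompLeft_surjective [CompactSpace X] [T2Space X] [CompleteSpace E]
    [CompleteSpace F] (P : E →L[ℝ] F) (hP : Function.Surjective P) :
    Function.Surjective (vanishingOnCompLeft Y P) := by
  obtain ⟨C, hC, hlift⟩ := P.exists_preimage_norm_le hP
  have : CompleteSpace (vanishingOn Y E) := (isClosed_vanishingOn Y E).completeSpace_coe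
  refine (vanishingOnCompLeft Y P).surjective_of_exists_approx_preimage_norm_le
    (continuous_vanishingOnCompLeft Y P) (C := 3 / 2 * C) (by positivity) fun g => ?_
  rcases eq_or_ne g 0 with rfl | hg
  · exact ⟨0, by simp⟩
  obtain ⟨f, hf⟩ := exists_continuous_approx_lift (P : E →ₗ[ℝ] F) hC.le hlift g.1
    (ε := 1 / 2 * ‖g‖) (by positivity)
  refine ⟨⟨f, fun y hy => (hf y).1 (g.2 y hy)⟩, ?_, ?_⟩
  · rw [Subtype.dist_eq]
    refine (dist_le (by positivity)).2 fun x => ?_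
    simpa [vanishingOnCompLeft] using (hf x).2.2.le
  · rw [AddSubgroup.coe_norm]
    refine (norm_le _ (by positivity)).2 fun x => (hf x).2.1.trans ?_
    calc C * (‖g.1 x‖ + 1 / 2 * ‖g‖) ≤ C * (‖g‖ + 1 / 2 * ‖g‖) := by
          gcongr; exact g.1.norm_coe_le_norm x
      _ = 3 / 2 * C * ‖g‖ := by ring

end ContinuousMap

theorem surjective_postcomposition_on_vanishing_functions_general
    (X : Type) [TopologicalSpace X] [CompactSpace X] [T2Space X]
    (Y : Set X)
    (A B : Type)
    [NonUnitalNormedRing A] [NormedSpace ℂ A] [CompleteSpace A]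
    [NonUnitalNormedRing B] [NormedSpace ℂ B] [CompleteSpace B]
    (p : A →ₙₐ[ℂ] B) (hp : Continuous p) (hsurj : Function.Surjective p) :
    ∀ g : C(X, B), (∀ y ∈ Y, g y = 0) →
      ∃ f : C(X, A), (∀ y ∈ Y, f y = 0) ∧ ∀ x, p (f x) = g x := by
  intro g hg
  let P : A →L[ℝ] B := ⟨(p : A →ₗ[ℂ] B).restrictScalars ℝ, hp⟩
  obtain ⟨f, hf⟩ := ContinuousMap.vanishingOnCompLeft_surjective Y P hsurj ⟨g, hg⟩
  exact ⟨f, f.2, DFunLike.congr_fun (congrArg Subtype.val hf)⟩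

theorem surjective_postcomposition_on_vanishing_functions
    (X : Type) [TopologicalSpace X] [CompactSpace X] [T2Space X]
    (Y : Set X) (hY : IsClosed Y)
    (A B : Type)
    [NonUnitalNormedRing A] [NormedSpace ℂ A] [IsScalarTower ℂ A A] [SMulCommClass ℂ A A] [CompleteSpace A]
    [NonUnitalNormedRing B] [NormedSpace ℂ B] [IsScalarTower ℂ B B] [SMulCommClass ℂ B B] [CompleteSpace B]
    (p : A →ₙₐ[ℂ] B) (hp : Continuous p) (hsurj : Function.Surjective p) :
    ∀ g : C(X, B), (∀ y ∈ Y, g y = 0) →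
      ∃ f : C(X, A), (∀ y ∈ Y, f y = 0) ∧ ∀ x, p (f x) = g x :=
  surjective_postcomposition_on_vanishing_functions_general X Y A B p hp hsurj
end

section
/- Mayer–Vietoris for function algebras: Let X, X' be compact Hausdorff spaces, Y ⊆ X and Y' ⊆ X' closed subsets, Z ⊆ Y and Z' ⊆ Y' closed subsets, and let f : X → X' be a continuous map with f(Y) ⊆ Y' and f(Z) ⊆ Z'; write g := f|_Y : Y → Y'. Assume that the square consisting of the inclusion Y ↪ X, the map g : Y → Y', the map f : X → X', and the inclusion Y' ↪ X' is a pushout in the category of topological spaces. Then for every Banach algebra A the square of restriction/pullback homomorphisms C(X',Z';A) → C(Y',Z';A) (restriction), C(X',Z';A) → C(X,Z;A) (composition with f), C(Y',Z';A) → C(Y,Z;A) (composition with g), C(X,Z;A) → C(Y,Z;A) (restriction) is a pullback: the canonical map from C(X',Z';A) to {(u, v) ∈ C(X,Z;A) × C(Y',Z';A) : u|_Y = v∘g} sending w to (w∘f, w|_{Y'}) is an isomorphism of Banach algebras. -/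
set_option linter.unusedSectionVars false
noncomputable section

section Vanish
variable (X : Type) [TopologicalSpace X] (A : Type) [NonUnitalNormedRing A] [NormedSpace ℂ A]
  [IsScalarTower ℂ A A] [SMulCommClass ℂ A A]

/-- `C(X,Y;A)`: the Banach algebra of continuous `A`-valued functions on `X` vanishing on
`Y`, as a subalgebra of `C(X,A)` with the sup norm. -/
def vanishAlg (Y : Set X) : NonUnitalSubalgebra ℂ C(X, A) where
  carrier := {f | ∀ y ∈ Y, f y = 0}
  add_mem' hf hg y hy := by simp [hf y hy, hg y hy]
  zero_mem' y hy := rfl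
  mul_mem' hf hg y hy := by simp [hg y hy]
  smul_mem' c f hf y hy := by simp [hf y hy]

variable {X A}

@[simp] lemma mem_vanishAlg {Y : Set X} {f : C(X, A)} :
    f ∈ vanishAlg X A Y ↔ ∀ y ∈ Y, f y = 0 := Iff.rfl

lemma isClosed_vanishAlg (Y : Set X) : IsClosed ((vanishAlg X A Y : Set C(X, A))) := by
  have : (vanishAlg X A Y : Set C(X, A)) = ⋂ y ∈ Y, {f : C(X, A) | f y = 0} := by
    ext f; simp [Set.mem_iInter]
  rw [this]
  exact isClosed_biInter fun y _ =>
    isClosed_eq (continuous_eval_const y) continuous_const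

variable {Y Z : Set X}

/-- The inclusion `C(X,Y;A) ↪ C(X,Z;A)` for `Z ⊆ Y`. -/
def vanishInclusion (hZY : Z ⊆ Y) (f : vanishAlg X A Y) : vanishAlg X A Z :=
  ⟨f.1, fun z hz => f.2 z (hZY hz)⟩

/-- The restriction map `C(X,Z;A) → C(Y, Y∩Z; A)`, `f ↦ f|_Y`. -/
def vanishRestriction (Y : Set X) (f : vanishAlg X A Z) :
    vanishAlg Y A {y : Y | (y : X) ∈ Z} :=
  ⟨f.1.restrict Y, fun y hy => f.2 y hy⟩

end Vanish

/-!
Testing the pushout property against the indiscrete space `Prop` shows that `X'` is covered by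
`f(X)` and `Y'`. Hence the sup norm of `w ∈ C(X', A)` is the larger of those of `w ∘ f` and
`w|_{Y'}`, so `w ↦ (w ∘ f, w|_{Y'})` is an isometric embedding; the pushout property with target
`A` makes it onto the compatible pairs, and the inverse keeps vanishing on `Z' ⊆ Y'`.
-/

open Set

section Pushout

variable {X X' : Type} [TopologicalSpace X] [TopologicalSpace X']

def IsPushoutSquare (f : C(X, X')) (Y : Set X) (Y' : Set X') (hfY : MapsTo f Y Y') : Prop :=
  ∀ (T : Type) [TopologicalSpace T] (u : C(X, T)) (v : C(Y', T)),
    (∀ y : Y, u y = v ⟨f y, hfY y.2⟩) →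
    ∃! w : C(X', T), (∀ x, w (f x) = u x) ∧ ∀ y' : Y', w y' = v y'

theorem IsPushoutSquare.range_union_eq_univ {f : C(X, X')} {Y : Set X} {Y' : Set X'}
    {hfY : MapsTo f Y Y'} (h : IsPushoutSquare f Y Y' hfY) : range f ∪ Y' = univ := by
  let _ : TopologicalSpace Prop := ⊤
  let mem : C(X', Prop) := ⟨(· ∈ range f ∪ Y'), continuous_top⟩
  have hmem : mem = ContinuousMap.const X' True :=
    (h Prop (.const X True) (.const Y' True) fun _ => rfl).unique
      ⟨fun x => eq_true (Or.inl ⟨x, rfl⟩), fun y' => eq_true (Or.inr y'.2)⟩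
      ⟨fun _ => rfl, fun _ => rfl⟩
  exact eq_univ_of_forall fun x' => of_eq_true congr($hmem x')

end Pushout

theorem ContinuousMap.isometry_comp_prodMk_restrict {X X' A : Type} [TopologicalSpace X]
    [CompactSpace X] [TopologicalSpace X'] [CompactSpace X'] [PseudoMetricSpace A]
    {f : C(X, X')} {Y' : Set X'} [CompactSpace Y'] (hcover : range f ∪ Y' = univ) :
    Isometry fun w : C(X', A) => (w.comp f, w.restrict Y') := by
  refine Isometry.of_dist_eq fun w₁ w₂ => le_antisymm ?_ ?_
  · rw [Prod.dist_eq]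
    exact max_le ((dist_le dist_nonneg).2 fun x => dist_apply_le_dist (f x))
      ((dist_le dist_nonneg).2 fun y' => dist_apply_le_dist (y' : X'))
  · refine (dist_le dist_nonneg).2 fun x' => ?_
    rcases (hcover ▸ mem_univ x' : x' ∈ range f ∪ Y') with ⟨x, rfl⟩ | hx'
    · exact (dist_apply_le_dist (f := w₁.comp f) (g := w₂.comp f) x).trans
        (le_max_left _ _)
    · exact (dist_apply_le_dist (f := w₁.restrict Y') (g := w₂.restrict Y') ⟨x', hx'⟩).trans
        (le_max_right _ _)

theorem mayer_vietoris_pullback_of_pushout_general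
    (X X' : Type) [TopologicalSpace X] [CompactSpace X]
    [TopologicalSpace X'] [CompactSpace X']
    (Y Z : Set X) (Y' Z' : Set X')
    (hY' : IsClosed Y') (hZY' : Z' ⊆ Y')
    (f : C(X, X')) (hfY : Set.MapsTo f Y Y') (hfZ : Set.MapsTo f Z Z')
    -- the square `Y ↪ X, g = f|_Y : Y → Y', f : X → X', Y' ↪ X'` is a pushout in `Top`
    (hpushout : ∀ (T : Type) [TopologicalSpace T] (u : C(X, T)) (v : C((Y' : Set X'), T)),
      (∀ y : Y, u y = v ⟨f y, hfY y.2⟩) →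
      ∃! w : C(X', T), (∀ x, w (f x) = u x) ∧ (∀ y' : (Y' : Set X'), w y' = v y'))
    (A : Type) [NonUnitalNormedRing A] [NormedSpace ℂ A] [IsScalarTower ℂ A A]
    [SMulCommClass ℂ A A] :
    IsHomeomorph (fun w : vanishAlg X' A Z' =>
      (⟨((w : C(X', A)).comp f, (w : C(X', A)).restrict Y'),
          fun z hz => w.2 (f z) (hfZ hz),
          fun z' hz' => w.2 z' hz',
          fun y => rfl⟩ :
        {p : C(X, A) × C((Y' : Set X'), A) //
          (∀ z ∈ Z, p.1 z = 0) ∧ (∀ z' : (Y' : Set X'), (z' : X') ∈ Z' → p.2 z' = 0) ∧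
          ∀ y : Y, p.1 y = p.2 ⟨f y, hfY y.2⟩})) := by
  have : CompactSpace Y' := isCompact_iff_compactSpace.mp hY'.isCompact
  have hcover := IsPushoutSquare.range_union_eq_univ (hfY := hfY) hpushout
  have hiso := ContinuousMap.isometry_comp_prodMk_restrict (A := A) hcover
  refine isHomeomorph_iff_isEmbedding_surjective.2
    ⟨Isometry.isEmbedding fun w₁ w₂ => hiso.edist_eq w₁ w₂, ?_⟩
  rintro ⟨⟨u, v⟩, -, hvZ', huv⟩
  obtain ⟨w, hwu, hwv⟩ := (hpushout A u v huv).exists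
  refine ⟨⟨w, fun z' hz' => (hwv ⟨z', hZY' hz'⟩).trans (hvZ' _ hz')⟩, ?_⟩
  ext1
  exact Prod.ext (ContinuousMap.ext hwu) (ContinuousMap.ext hwv)

theorem mayer_vietoris_pullback_of_pushout
    (X X' : Type) [TopologicalSpace X] [CompactSpace X] [T2Space X]
    [TopologicalSpace X'] [CompactSpace X'] [T2Space X']
    (Y Z : Set X) (Y' Z' : Set X')
    (hY : IsClosed Y) (hZ : IsClosed Z) (hZY : Z ⊆ Y)
    (hY' : IsClosed Y') (hZ' : IsClosed Z') (hZY' : Z' ⊆ Y')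
    (f : C(X, X')) (hfY : Set.MapsTo f Y Y') (hfZ : Set.MapsTo f Z Z')
    -- the square `Y ↪ X, g = f|_Y : Y → Y', f : X → X', Y' ↪ X'` is a pushout in `Top`
    (hpushout : ∀ (T : Type) [TopologicalSpace T] (u : C(X, T)) (v : C((Y' : Set X'), T)),
      (∀ y : Y, u y = v ⟨f y, hfY y.2⟩) →
      ∃! w : C(X', T), (∀ x, w (f x) = u x) ∧ (∀ y' : (Y' : Set X'), w y' = v y'))
    (A : Type) [NonUnitalNormedRing A] [NormedSpace ℂ A] [IsScalarTower ℂ A A]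
    [SMulCommClass ℂ A A] [CompleteSpace A] :
    IsHomeomorph (fun w : vanishAlg X' A Z' =>
      (⟨((w : C(X', A)).comp f, (w : C(X', A)).restrict Y'),
          fun z hz => w.2 (f z) (hfZ hz),
          fun z' hz' => w.2 z' hz',
          fun y => rfl⟩ :
        {p : C(X, A) × C((Y' : Set X'), A) //
          (∀ z ∈ Z, p.1 z = 0) ∧ (∀ z' : (Y' : Set X'), (z' : X') ∈ Z' → p.2 z' = 0) ∧
          ∀ y : Y, p.1 y = p.2 ⟨f y, hfY y.2⟩})) :=
  mayer_vietoris_pullback_of_pushout_general X X' Y Z Y' Z' hY' hZY' f hfY hfZ hpushout A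
end
end

section
/- Let φ₁, φ₂ : A → B be orthogonal continuous homomorphisms of Banach algebras, i.e. φ₁(a)φ₂(a') = 0 = φ₂(a')φ₁(a) for all a, a' ∈ A. Then φ₁ + φ₂ is a continuous homomorphism, Σφ₁ and Σφ₂ are orthogonal homomorphisms from ΣA to ΣB, and Σ(φ₁ + φ₂) = Σφ₁ + Σφ₂ is homotopic to the concatenation Σφ₁ ∙ Σφ₂ : ΣA → ΣB, which is defined by (Σφ₁ ∙ Σφ₂)(f)(t) = φ₁(f(2t)) for t ∈ (0, 1/2] and (Σφ₁ ∙ Σφ₂)(f)(t) = φ₂(f(2t − 1)) for t ∈ [1/2, 1). -/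
set_option synthInstance.maxHeartbeats 1000000
set_option maxHeartbeats 2000000
set_option linter.unusedSectionVars false
noncomputable section
open scoped unitInterval

section Susp
variable (A : Type) [NonUnitalNormedRing A] [NormedSpace ℂ A] [IsScalarTower ℂ A A] [SMulCommClass ℂ A A]

/-- `ΣA`, the suspension of `A`: continuous functions on `[0,1]` vanishing at both endpoints. -/
def suspAlg : NonUnitalSubalgebra ℂ C(unitInterval, A) := vanishAlg unitInterval A {0, 1}

variable {A} {B : Type} [NonUnitalNormedRing B] [NormedSpace ℂ B] [IsScalarTower ℂ B B] [SMulCommClass ℂ B B]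

lemma susp_apply_zero (f : suspAlg A) : f.1 0 = 0 := f.2 0 (Set.mem_insert _ _)
lemma susp_apply_one (f : suspAlg A) : f.1 1 = 0 := f.2 1 (Set.mem_insert_of_mem _ rfl)

/-- Postcomposition with a continuous homomorphism. -/
def postcompHom (φ : A →ₙₐ[ℂ] B) (hφ : Continuous φ) :
    C(unitInterval, A) →ₙₐ[ℂ] C(unitInterval, B) where
  toFun f := (⟨⇑φ, hφ⟩ : C(A, B)).comp f
  map_smul' c f := by ext t; simp
  map_zero' := by ext t; simp
  map_add' f g := by ext t; simp
  map_mul' f g := by ext t; simp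

@[simp] lemma postcompHom_apply (φ : A →ₙₐ[ℂ] B) (hφ : Continuous φ) (f : C(unitInterval, A))
    (t : unitInterval) : postcompHom φ hφ f t = φ (f t) := rfl

/-- `Σφ`, the suspension of a continuous homomorphism `φ`. -/
def suspMap (φ : A →ₙₐ[ℂ] B) (hφ : Continuous φ) : suspAlg A →ₙₐ[ℂ] suspAlg B where
  toFun f := ⟨postcompHom φ hφ f.1, by
    rintro y (rfl | rfl)
    · simp [susp_apply_zero f]
    · simp [susp_apply_one f]⟩
  map_smul' c f := by apply Subtype.ext; exact map_smul (postcompHom φ hφ) c f.1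
  map_zero' := by apply Subtype.ext; exact map_zero (postcompHom φ hφ)
  map_add' f g := by apply Subtype.ext; exact map_add (postcompHom φ hφ) f.1 g.1
  map_mul' f g := by apply Subtype.ext; exact map_mul (postcompHom φ hφ) f.1 g.1

@[simp] lemma suspMap_apply (φ : A →ₙₐ[ℂ] B) (hφ : Continuous φ) (f : suspAlg A) (t : unitInterval) :
    ((suspMap φ hφ f : suspAlg B) : C(unitInterval, B)) t = φ (f.1 t) := rfl

lemma continuous_suspMap (φ : A →ₙₐ[ℂ] B) (hφ : Continuous φ) : Continuous (suspMap φ hφ) := by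
  apply Continuous.subtype_mk
  exact (ContinuousMap.continuous_postcomp _).comp continuous_subtype_val

end Susp

section MappingCone
variable {D A : Type}
  [NonUnitalNormedRing D] [NormedSpace ℂ D] [IsScalarTower ℂ D D] [SMulCommClass ℂ D D]
  [NonUnitalNormedRing A] [NormedSpace ℂ A] [IsScalarTower ℂ A A] [SMulCommClass ℂ A A]

/-- The mapping cone `C_π = {(c, d) ∈ CA × D : c(1) = 0, c(0) = π(d)}` of `π : D → A`,
as a closed subalgebra of `C([0,1], A) × D` (with the maximum norm). -/
def mappingCone (π : D →ₙₐ[ℂ] A) : NonUnitalSubalgebra ℂ (C(unitInterval, A) × D) where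
  carrier := {p | p.1 1 = 0 ∧ p.1 0 = π p.2}
  add_mem' := by
    rintro p q ⟨hp1, hp0⟩ ⟨hq1, hq0⟩
    exact ⟨by simp [hp1, hq1], by simp [hp0, hq0]⟩
  zero_mem' := ⟨rfl, by simp⟩
  mul_mem' := by
    rintro p q ⟨hp1, hp0⟩ ⟨hq1, hq0⟩
    exact ⟨by simp [hp1, hq1], by simp [hp0, hq0]⟩
  smul_mem' := by
    rintro c p ⟨hp1, hp0⟩
    exact ⟨by simp [hp1], by simp [hp0]⟩

@[simp] lemma mem_mappingCone {π : D →ₙₐ[ℂ] A} {p : C(unitInterval, A) × D} :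
    p ∈ mappingCone π ↔ p.1 1 = 0 ∧ p.1 0 = π p.2 := Iff.rfl

lemma isClosed_mappingCone (π : D →ₙₐ[ℂ] A) (hπ : Continuous π) :
    IsClosed ((mappingCone π : Set (C(unitInterval, A) × D))) := by
  have h1 : IsClosed {p : C(unitInterval, A) × D | p.1 1 = 0} :=
    isClosed_eq ((continuous_eval_const 1).comp continuous_fst) continuous_const
  have h2 : IsClosed {p : C(unitInterval, A) × D | p.1 0 = π p.2} :=
    isClosed_eq ((continuous_eval_const 0).comp continuous_fst)
      (hπ.comp continuous_snd)
  exact h1.inter h2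

/-- The canonical epimorphism `ε(π) : C_π → D, (c, d) ↦ d`. -/
def coneEps (π : D →ₙₐ[ℂ] A) : mappingCone π →ₙₐ[ℂ] D where
  toFun p := p.1.2
  map_smul' _ _ := rfl
  map_zero' := rfl
  map_add' _ _ := rfl
  map_mul' _ _ := rfl

lemma continuous_coneEps (π : D →ₙₐ[ℂ] A) : Continuous (coneEps π) :=
  continuous_snd.comp continuous_subtype_val

/-- The canonical inclusion `ι(π) : ΣA → C_π, f ↦ (f, 0)`. -/
def coneIota (π : D →ₙₐ[ℂ] A) : suspAlg A →ₙₐ[ℂ] mappingCone π where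
  toFun f := ⟨(f.1, 0), ⟨susp_apply_one f, by simp [susp_apply_zero f]⟩⟩
  map_smul' c f := by apply Subtype.ext; exact Prod.ext (by rfl) (by simp)
  map_zero' := by apply Subtype.ext; exact Prod.ext (by rfl) (by simp)
  map_add' f g := by apply Subtype.ext; exact Prod.ext (by rfl) (by simp)
  map_mul' f g := by apply Subtype.ext; exact Prod.ext (by rfl) (by simp)

lemma continuous_coneIota (π : D →ₙₐ[ℂ] A) : Continuous (coneIota π) := by
  apply Continuous.subtype_mk
  exact (continuous_subtype_val).prodMk continuous_const

end MappingCone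

section Homotopy
/-- Two continuous homomorphisms `φ, ψ : A → B` are homotopic if there is a continuous
homomorphism `H : A → C([0,1], B)` with `ev₀ ∘ H = φ` and `ev₁ ∘ H = ψ`. -/
def NAlgHomotopic {A B : Type} [NonUnitalNonAssocSemiring A] [Module ℂ A] [TopologicalSpace A]
    [NonUnitalNonAssocSemiring B] [Module ℂ B] [TopologicalSpace B] [IsTopologicalSemiring B]
    [ContinuousConstSMul ℂ B] (φ ψ : A →ₙₐ[ℂ] B) : Prop :=
  ∃ H : A →ₙₐ[ℂ] C(unitInterval, B),
    Continuous H ∧ (∀ a, H a 0 = φ a) ∧ (∀ a, H a 1 = ψ a)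
end Homotopy

/-!
Write `H_s(f)(t) = φ₁(f((1 + s)t)) + φ₂(f((1 + s)t - s))`, the arguments of `f` clamped to
`[0, 1]`. Each `H_s` is a sum of two orthogonal homomorphisms, hence a homomorphism, and it is
jointly continuous in `(f, s)`. At `s = 0` it is `Σ(φ₁ + φ₂)`; at `s = 1` the first summand lives on
`[0, 1/2]` and the second on `[1/2, 1]` (since `f` vanishes at the endpoints), which is the
concatenation.
-/

section Orthogonal
variable {R A B : Type*} [Monoid R] [NonUnitalNonAssocSemiring A] [DistribMulAction R A]
  [NonUnitalNonAssocSemiring B] [DistribMulAction R B]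

def AreOrthogonal (φ₁ φ₂ : A →ₙₐ[R] B) : Prop :=
  ∀ a a' : A, φ₁ a * φ₂ a' = 0 ∧ φ₂ a' * φ₁ a = 0

variable {φ₁ φ₂ : A →ₙₐ[R] B}

def AreOrthogonal.add (h : AreOrthogonal φ₁ φ₂) : A →ₙₐ[R] B where
  toFun a := φ₁ a + φ₂ a
  map_smul' c a := by simp only [map_smul, smul_add, MonoidHom.id_apply]
  map_zero' := by simp only [map_zero, add_zero]
  map_add' a b := by simp only [map_add]; abel
  map_mul' a b := by simp only [map_mul, add_mul, mul_add, (h a b).1, (h b a).2]; abel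

@[simp] lemma AreOrthogonal.add_apply (h : AreOrthogonal φ₁ φ₂) (a : A) :
    h.add a = φ₁ a + φ₂ a := rfl

lemma AreOrthogonal.continuous_add [TopologicalSpace A] [TopologicalSpace B] [ContinuousAdd B]
    (h : AreOrthogonal φ₁ φ₂) (hφ₁ : Continuous φ₁) (hφ₂ : Continuous φ₂) :
    Continuous h.add :=
  hφ₁.add hφ₂

end Orthogonal

def ContinuousMap.evalNonUnitalAlgHom {R X B : Type*} [Monoid R] [TopologicalSpace X]
    [NonUnitalNonAssocSemiring B] [TopologicalSpace B] [IsTopologicalSemiring B]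
    [DistribMulAction R B] [ContinuousConstSMul R B] (x : X) : C(X, B) →ₙₐ[R] B where
  toFun f := f x
  map_smul' _ _ := rfl
  map_zero' := rfl
  map_add' _ _ := rfl
  map_mul' _ _ := rfl

section Reparametrization
variable {A B : Type}
  [NonUnitalNormedRing A] [NormedSpace ℂ A] [IsScalarTower ℂ A A] [SMulCommClass ℂ A A]
  [NonUnitalNormedRing B] [NormedSpace ℂ B] [IsScalarTower ℂ B B] [SMulCommClass ℂ B B]

lemma curry_mem_suspAlg {g : C(I × I, B)} (h₀ : ∀ s, g (s, 0) = 0) (h₁ : ∀ s, g (s, 1) = 0)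
    (s : I) : g.curry s ∈ suspAlg B := by
  rintro y (rfl | rfl)
  exacts [h₀ s, h₁ s]

/-- `f ↦ (s ↦ φ ∘ f ∘ p(s, ·))`. -/
def suspReparamFamily (φ : A →ₙₐ[ℂ] B) (hφ : Continuous φ) (p : C(I × I, I))
    (hp₀ : ∀ s, p (s, 0) = 0) (hp₁ : ∀ s, p (s, 1) = 1) :
    suspAlg A →ₙₐ[ℂ] C(I, suspAlg B) where
  toFun f :=
    have mem := curry_mem_suspAlg (g := (postcompHom φ hφ f.1).comp p)
      (by simp [hp₀, susp_apply_zero f]) (by simp [hp₁, susp_apply_one f])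
    ⟨fun s => ⟨_, mem s⟩, (ContinuousMap.continuous _).subtype_mk mem⟩
  map_smul' c f := by ext; simp
  map_zero' := by ext; simp
  map_add' f g := by ext; simp
  map_mul' f g := by ext; simp

lemma continuous_suspReparamFamily (φ : A →ₙₐ[ℂ] B) (hφ : Continuous φ) (p : C(I × I, I))
    (hp₀ : ∀ s, p (s, 0) = 0) (hp₁ : ∀ s, p (s, 1) = 1) :
    Continuous (suspReparamFamily φ hφ p hp₀ hp₁) := by
  refine (ContinuousMap.isInducing_postcomp ⟨_, continuous_subtype_val⟩
    Topology.IsInducing.subtypeVal).continuous_iff.2 ?_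
  exact ContinuousMap.continuous_curry.comp
    ((ContinuousMap.continuous_precomp p).comp
      ((ContinuousMap.continuous_postcomp _).comp continuous_subtype_val))

@[simp] lemma suspReparamFamily_apply (φ : A →ₙₐ[ℂ] B) (hφ : Continuous φ) (p : C(I × I, I))
    (hp₀ : ∀ s, p (s, 0) = 0) (hp₁ : ∀ s, p (s, 1) = 1) (f : suspAlg A) (s t : I) :
    (suspReparamFamily φ hφ p hp₀ hp₁ f s : C(I, B)) t = φ (f.1 (p (s, t))) := rfl

variable {φ₁ φ₂ : A →ₙₐ[ℂ] B}

lemma AreOrthogonal.suspMap (h : AreOrthogonal φ₁ φ₂) (hφ₁ : Continuous φ₁)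
    (hφ₂ : Continuous φ₂) : AreOrthogonal (suspMap φ₁ hφ₁) (suspMap φ₂ hφ₂) := fun _ _ =>
  ⟨Subtype.ext <| ContinuousMap.ext fun _ => (h _ _).1,
    Subtype.ext <| ContinuousMap.ext fun _ => (h _ _).2⟩

lemma AreOrthogonal.suspReparamFamily (h : AreOrthogonal φ₁ φ₂) (hφ₁ : Continuous φ₁)
    (hφ₂ : Continuous φ₂) {p q : C(I × I, I)} (hp₀ : ∀ s, p (s, 0) = 0) (hp₁ : ∀ s, p (s, 1) = 1)
    (hq₀ : ∀ s, q (s, 0) = 0) (hq₁ : ∀ s, q (s, 1) = 1) :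
    AreOrthogonal (suspReparamFamily φ₁ hφ₁ p hp₀ hp₁) (suspReparamFamily φ₂ hφ₂ q hq₀ hq₁) :=
  fun _ _ =>
    ⟨ContinuousMap.ext fun _ => Subtype.ext <| ContinuousMap.ext fun _ => (h _ _).1,
      ContinuousMap.ext fun _ => Subtype.ext <| ContinuousMap.ext fun _ => (h _ _).2⟩

end Reparametrization

section Stretch

/-- At time `s = 1`, `stretchLeft` and `stretchRight` run through `I` on `[0, 1/2]` and on
`[1/2, 1]` respectively. -/
def stretchLeft : C(I × I, I) :=
  ⟨fun x => Set.projIcc 0 1 zero_le_one ((1 + (x.1 : ℝ)) * x.2),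
    continuous_projIcc.comp (by fun_prop)⟩

def stretchRight : C(I × I, I) :=
  ⟨fun x => Set.projIcc 0 1 zero_le_one ((1 + (x.1 : ℝ)) * x.2 - x.1),
    continuous_projIcc.comp (by fun_prop)⟩

lemma stretchLeft_apply_zero_right (s : I) : stretchLeft (s, 0) = 0 := by
  simp [stretchLeft]

lemma stretchLeft_apply_one_right (s : I) : stretchLeft (s, 1) = 1 := by
  simp [stretchLeft, unitInterval.nonneg]

lemma stretchRight_apply_zero_right (s : I) : stretchRight (s, 0) = 0 := by
  simp [stretchRight, unitInterval.nonneg]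

lemma stretchRight_apply_one_right (s : I) : stretchRight (s, 1) = 1 := by
  simp [stretchRight]

lemma stretchLeft_apply_zero_left (t : I) : stretchLeft (0, t) = t := by
  simp [stretchLeft]

lemma stretchRight_apply_zero_left (t : I) : stretchRight (0, t) = t := by
  simp [stretchRight]

lemma stretchLeft_apply_one_left (t : I) :
    stretchLeft (1, t) = Set.projIcc 0 1 zero_le_one (2 * (t : ℝ)) := by
  norm_num [stretchLeft]

lemma stretchRight_apply_one_left (t : I) :
    stretchRight (1, t) = Set.projIcc 0 1 zero_le_one (2 * (t : ℝ) - 1) := by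
  norm_num [stretchRight]

end Stretch

section Concatenation
variable {A B : Type}
  [NonUnitalNormedRing A] [NormedSpace ℂ A] [IsScalarTower ℂ A A] [SMulCommClass ℂ A A]
  [NonUnitalNormedRing B] [NormedSpace ℂ B] [IsScalarTower ℂ B B] [SMulCommClass ℂ B B]
  {φ₁ φ₂ : A →ₙₐ[ℂ] B} (h : AreOrthogonal φ₁ φ₂) (hφ₁ : Continuous φ₁) (hφ₂ : Continuous φ₂)

def AreOrthogonal.suspHomotopy : suspAlg A →ₙₐ[ℂ] C(I, suspAlg B) :=
  (h.suspReparamFamily hφ₁ hφ₂ stretchLeft_apply_zero_right stretchLeft_apply_one_right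
    stretchRight_apply_zero_right stretchRight_apply_one_right).add

lemma AreOrthogonal.continuous_suspHomotopy : Continuous (h.suspHomotopy hφ₁ hφ₂) :=
  AreOrthogonal.continuous_add _ (continuous_suspReparamFamily _ _ _ _ _)
    (continuous_suspReparamFamily _ _ _ _ _)

/-- The concatenation `Σφ₁ ∙ Σφ₂`. -/
def AreOrthogonal.suspConcat : suspAlg A →ₙₐ[ℂ] suspAlg B :=
  (ContinuousMap.evalNonUnitalAlgHom 1).comp (h.suspHomotopy hφ₁ hφ₂)

lemma AreOrthogonal.suspConcat_apply (f : suspAlg A) (t : I) :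
    (h.suspConcat hφ₁ hφ₂ f).1 t = φ₁ (f.1 (stretchLeft (1, t))) + φ₂ (f.1 (stretchRight (1, t))) :=
  rfl

lemma AreOrthogonal.suspConcat_apply_of_le_half (f : suspAlg A) (t : I) (ht : (t : ℝ) ≤ 1 / 2) :
    (h.suspConcat hφ₁ hφ₂ f).1 t = φ₁ (f.1 (Set.projIcc 0 1 zero_le_one (2 * (t : ℝ)))) := by
  have hright : stretchRight (1, t) = 0 := by
    rw [stretchRight_apply_one_left]
    exact Set.projIcc_of_le_left _ (by linarith)
  rw [suspConcat_apply, hright, susp_apply_zero, map_zero, add_zero, stretchLeft_apply_one_left]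

lemma AreOrthogonal.suspConcat_apply_of_half_le (f : suspAlg A) (t : I) (ht : 1 / 2 ≤ (t : ℝ)) :
    (h.suspConcat hφ₁ hφ₂ f).1 t = φ₂ (f.1 (Set.projIcc 0 1 zero_le_one (2 * (t : ℝ) - 1))) := by
  have hleft : stretchLeft (1, t) = 1 := by
    rw [stretchLeft_apply_one_left]
    exact Set.projIcc_of_right_le _ (by linarith)
  rw [suspConcat_apply, hleft, susp_apply_one, map_zero, zero_add, stretchRight_apply_one_left]

lemma AreOrthogonal.suspMap_add_homotopic_suspConcat :
    NAlgHomotopic (_root_.suspMap h.add (h.continuous_add hφ₁ hφ₂)) (h.suspConcat hφ₁ hφ₂) :=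
  ⟨h.suspHomotopy hφ₁ hφ₂, h.continuous_suspHomotopy hφ₁ hφ₂,
    fun f => Subtype.ext <| ContinuousMap.ext fun t => by
      simp [suspHomotopy, stretchLeft_apply_zero_left, stretchRight_apply_zero_left],
    fun _ => rfl⟩

end Concatenation

theorem orthogonal_homomorphisms_sum_homotopic_concatenation_general
    (A B : Type)
    [NonUnitalNormedRing A] [NormedSpace ℂ A] [IsScalarTower ℂ A A] [SMulCommClass ℂ A A]
    [NonUnitalNormedRing B] [NormedSpace ℂ B] [IsScalarTower ℂ B B] [SMulCommClass ℂ B B]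
    (φ₁ φ₂ : A →ₙₐ[ℂ] B) (hφ₁ : Continuous φ₁) (hφ₂ : Continuous φ₂)
    (horth : ∀ a a' : A, φ₁ a * φ₂ a' = 0 ∧ φ₂ a' * φ₁ a = 0) :
    ∃ (ψ : A →ₙₐ[ℂ] B) (hψc : Continuous ψ),
      -- `φ₁ + φ₂` is a (continuous) homomorphism `ψ`
      (∀ a, ψ a = φ₁ a + φ₂ a) ∧
      -- `Σφ₁` and `Σφ₂` are orthogonal homomorphisms from `ΣA` to `ΣB`
      (∀ f g : suspAlg A,
        suspMap φ₁ hφ₁ f * suspMap φ₂ hφ₂ g = 0 ∧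
        suspMap φ₂ hφ₂ g * suspMap φ₁ hφ₁ f = 0) ∧
      -- `Σ(φ₁ + φ₂) = Σφ₁ + Σφ₂`
      (∀ f : suspAlg A, suspMap ψ hψc f = suspMap φ₁ hφ₁ f + suspMap φ₂ hφ₂ f) ∧
      -- and it is homotopic to the concatenation `Σφ₁ ∙ Σφ₂`
      ∃ conc : suspAlg A →ₙₐ[ℂ] suspAlg B,
        (∀ (f : suspAlg A) (t : unitInterval), (t : ℝ) ≤ 1 / 2 →
          (conc f).1 t = φ₁ (f.1 (Set.projIcc 0 1 zero_le_one (2 * (t : ℝ))))) ∧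
        (∀ (f : suspAlg A) (t : unitInterval), 1 / 2 ≤ (t : ℝ) →
          (conc f).1 t = φ₂ (f.1 (Set.projIcc 0 1 zero_le_one (2 * (t : ℝ) - 1)))) ∧
        NAlgHomotopic (suspMap ψ hψc) conc := by
  have h : AreOrthogonal φ₁ φ₂ := horth
  exact ⟨h.add, h.continuous_add hφ₁ hφ₂, fun _ => rfl, h.suspMap hφ₁ hφ₂, fun _ => rfl,
    h.suspConcat hφ₁ hφ₂, h.suspConcat_apply_of_le_half hφ₁ hφ₂,
    h.suspConcat_apply_of_half_le hφ₁ hφ₂, h.suspMap_add_homotopic_suspConcat hφ₁ hφ₂⟩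

theorem orthogonal_homomorphisms_sum_homotopic_concatenation
    (A B : Type)
    [NonUnitalNormedRing A] [NormedSpace ℂ A] [IsScalarTower ℂ A A] [SMulCommClass ℂ A A] [CompleteSpace A]
    [NonUnitalNormedRing B] [NormedSpace ℂ B] [IsScalarTower ℂ B B] [SMulCommClass ℂ B B] [CompleteSpace B]
    (φ₁ φ₂ : A →ₙₐ[ℂ] B) (hφ₁ : Continuous φ₁) (hφ₂ : Continuous φ₂)
    (horth : ∀ a a' : A, φ₁ a * φ₂ a' = 0 ∧ φ₂ a' * φ₁ a = 0) :
    ∃ (ψ : A →ₙₐ[ℂ] B) (hψc : Continuous ψ),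
      -- `φ₁ + φ₂` is a (continuous) homomorphism `ψ`
      (∀ a, ψ a = φ₁ a + φ₂ a) ∧
      -- `Σφ₁` and `Σφ₂` are orthogonal homomorphisms from `ΣA` to `ΣB`
      (∀ f g : suspAlg A,
        suspMap φ₁ hφ₁ f * suspMap φ₂ hφ₂ g = 0 ∧
        suspMap φ₂ hφ₂ g * suspMap φ₁ hφ₁ f = 0) ∧
      -- `Σ(φ₁ + φ₂) = Σφ₁ + Σφ₂`
      (∀ f : suspAlg A, suspMap ψ hψc f = suspMap φ₁ hφ₁ f + suspMap φ₂ hφ₂ f) ∧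
      -- and it is homotopic to the concatenation `Σφ₁ ∙ Σφ₂`
      ∃ conc : suspAlg A →ₙₐ[ℂ] suspAlg B,
        (∀ (f : suspAlg A) (t : unitInterval), (t : ℝ) ≤ 1 / 2 →
          (conc f).1 t = φ₁ (f.1 (Set.projIcc 0 1 zero_le_one (2 * (t : ℝ))))) ∧
        (∀ (f : suspAlg A) (t : unitInterval), 1 / 2 ≤ (t : ℝ) →
          (conc f).1 t = φ₂ (f.1 (Set.projIcc 0 1 zero_le_one (2 * (t : ℝ) - 1)))) ∧
        NAlgHomotopic (suspMap ψ hψc) conc :=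
  orthogonal_homomorphisms_sum_homotopic_concatenation_general A B φ₁ φ₂ hφ₁ hφ₂ horth
end
end

section
/- Let F be a functor from the category BanAlg of Banach algebras and continuous homomorphisms into an additive category, and assume F is homotopy invariant and half-exact for semi-split extensions. Then for every semi-split extension B ↣^i D ↠^π A of Banach algebras, the homomorphism κ_π : B → C_π, b ↦ (0, i(b)), from B into the mapping cone C_π of π induces an isomorphism F(B) ≅ F(C_π). -/
set_option linter.unusedSectionVars false
noncomputable section
open scoped unitInterval

open CategoryTheory

/-- A bundled (possibly non-unital, possibly degenerate) complex Banach algebra. -/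
structure BanAlg : Type 1 where
  carrier : Type
  [nonUnitalNormedRing : NonUnitalNormedRing carrier]
  [normedSpace : NormedSpace ℂ carrier]
  [isScalarTower : IsScalarTower ℂ carrier carrier]
  [smulCommClass : SMulCommClass ℂ carrier carrier]
  [completeSpace : CompleteSpace carrier]

namespace BanAlg

attribute [instance] nonUnitalNormedRing normedSpace isScalarTower smulCommClass completeSpace

instance : CoeSort BanAlg Type := ⟨carrier⟩

/-- Build a bundled Banach algebra from an unbundled one. -/
def of (A : Type) [NonUnitalNormedRing A] [NormedSpace ℂ A] [IsScalarTower ℂ A A]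
    [SMulCommClass ℂ A A] [CompleteSpace A] : BanAlg := ⟨A⟩

/-- The category `BanAlg` of Banach algebras and continuous algebra homomorphisms. -/
instance : Category BanAlg where
  Hom A B := {f : A →ₙₐ[ℂ] B // Continuous f}
  id A := ⟨NonUnitalAlgHom.id ℂ A, continuous_id⟩
  comp f g := ⟨g.1.comp f.1, g.2.comp f.2⟩
  id_comp f := Subtype.ext (by ext x; rfl)
  comp_id f := Subtype.ext (by ext x; rfl)
  assoc f g h := Subtype.ext (by ext x; rfl)

/-- A closed subalgebra of a Banach algebra is a Banach algebra. -/
def ofSubalg {R : Type} [NonUnitalNormedRing R] [NormedSpace ℂ R] [IsScalarTower ℂ R R]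
    [SMulCommClass ℂ R R] [CompleteSpace R] (S : NonUnitalSubalgebra ℂ R)
    (hS : IsClosed (S : Set R)) : BanAlg :=
  letI : CompleteSpace S := hS.completeSpace_coe
  letI : NormedSpace ℂ S := SubmoduleClass.toNormedSpace S
  BanAlg.of S

end BanAlg

/-- The suspension, as an object of `BanAlg`. -/
def suspObj (A : BanAlg) : BanAlg := BanAlg.ofSubalg (suspAlg A) (isClosed_vanishAlg _)

/-- The suspension of a morphism of `BanAlg`. -/
def suspHom {A B : BanAlg} (f : A ⟶ B) : suspObj A ⟶ suspObj B :=
  ⟨suspMap f.1 f.2, continuous_suspMap f.1 f.2⟩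

/-- The suspension functor `Σ : BanAlg ⥤ BanAlg`. -/
def suspFunctor : BanAlg ⥤ BanAlg where
  obj := suspObj
  map := suspHom
  map_id := by
    intro A
    apply Subtype.ext
    apply NonUnitalAlgHom.ext
    intro f
    apply Subtype.ext
    ext t
    rfl
  map_comp := by
    intro A B C f g
    apply Subtype.ext
    apply NonUnitalAlgHom.ext
    intro x
    apply Subtype.ext
    ext t
    rfl

/-- The mapping cone of a morphism of `BanAlg`, as an object of `BanAlg`. -/
def coneObj {D A : BanAlg} (π : D ⟶ A) : BanAlg :=
  BanAlg.ofSubalg (mappingCone π.1) (isClosed_mappingCone π.1 π.2)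

/-- The canonical inclusion `ι(π) : ΣA → C_π`, as a morphism of `BanAlg`. -/
def coneIotaHom {D A : BanAlg} (π : D ⟶ A) : suspObj A ⟶ coneObj π :=
  ⟨coneIota π.1, continuous_coneIota π.1⟩

/-- Extensions of Banach algebras: `i` is injective with closed range, `π` is surjective,
and `range i = ker π`. -/
structure IsExtensionHom {B D A : BanAlg} (i : B ⟶ D) (π : D ⟶ A) : Prop where
  inj : Function.Injective i.1
  closedRange : IsClosed (Set.range i.1)
  surj : Function.Surjective π.1
  exact : Set.range i.1 = {d | π.1 d = 0}

/-- A (quotient map of an) extension is semi-split if it admits a continuous linear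
(not necessarily multiplicative) section. -/
def IsSemiSplit {D A : BanAlg} (π : D ⟶ A) : Prop :=
  ∃ s : A.carrier →L[ℂ] D.carrier, ∀ a, π.1 (s a) = a

/-- The canonical comparison morphism `κ_π : B → C_π`, `b ↦ (0, i(b))`. -/
def coneKappaHom {B D A : BanAlg} (i : B ⟶ D) (π : D ⟶ A) (hext : IsExtensionHom i π) :
    B ⟶ coneObj π := by
  have hker : ∀ b, (0 : A.carrier) = π.1 (i.1 b) := by
    intro b
    have : i.1 b ∈ {d | π.1 d = 0} := hext.exact ▸ Set.mem_range_self b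
    exact this.symm
  refine ⟨{ toFun := fun b => ⟨((0 : C(unitInterval, A.carrier)), i.1 b), ⟨rfl, hker b⟩⟩,
            map_smul' := ?_, map_zero' := ?_, map_add' := ?_, map_mul' := ?_ }, ?_⟩
  · intro c b
    apply Subtype.ext
    refine Prod.ext ?_ ?_
    · simp only [map_smul]; exact (smul_zero c).symm
    · simp only [map_smul]; rfl
  · apply Subtype.ext; exact Prod.ext (by simp; rfl) (by simp; rfl)
  · intro a b
    apply Subtype.ext
    refine Prod.ext ?_ ?_
    · simp only [map_add]; exact (add_zero 0).symm
    · simp only [map_add]; rfl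
  · intro a b
    apply Subtype.ext
    refine Prod.ext ?_ ?_
    · simp only [map_mul]; exact (mul_zero 0).symm
    · simp only [map_mul]; rfl
  · exact Continuous.subtype_mk (continuous_const.prodMk (i.2.comp continuous_id)) _

/-- A functor on `BanAlg` is homotopy invariant if it identifies homotopic morphisms. -/
def HomotopyInvariant {𝒞 : Type*} [Category 𝒞] (F : BanAlg ⥤ 𝒞) : Prop :=
  ∀ (A B : BanAlg) (f g : A ⟶ B), NAlgHomotopic f.1 g.1 → F.map f = F.map g

/-- A functor on `BanAlg` with values in an additive category is half-exact for semi-split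
extensions if, for every object `X` and every semi-split extension `B ↣ D ↠ A`, the
sequences of abelian groups `Hom(X,F(B)) → Hom(X,F(D)) → Hom(X,F(A))` and
`Hom(F(A),X) → Hom(F(D),X) → Hom(F(B),X)` are exact in the middle. -/
def HalfExactFunctor {𝒞 : Type*} [Category 𝒞] [Preadditive 𝒞] (F : BanAlg ⥤ 𝒞) : Prop :=
  ∀ (B D A : BanAlg) (i : B ⟶ D) (π : D ⟶ A), IsExtensionHom i π → IsSemiSplit π →
    ∀ X : 𝒞,
      Function.Exact (fun u : X ⟶ F.obj B => u ≫ F.map i)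
        (fun u : X ⟶ F.obj D => u ≫ F.map π) ∧
      Function.Exact (fun u : F.obj A ⟶ X => F.map π ≫ u)
        (fun u : F.obj D ⟶ X => F.map i ≫ u)

/-- A functor on `BanAlg` with values in an additive category is split-exact if for every
split extension `B ↣ D ↠ A` with multiplicative continuous section `σ`, the induced map
`F(B) ⊕ F(A) → F(D)` is an isomorphism. -/
def SplitExactFunctor {𝒞 : Type*} [Category 𝒞] [Preadditive 𝒞]
    [Limits.HasBinaryBiproducts 𝒞] (F : BanAlg ⥤ 𝒞) : Prop :=
  ∀ (B D A : BanAlg) (i : B ⟶ D) (π : D ⟶ A) (s : A ⟶ D),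
    IsExtensionHom i π → s ≫ π = 𝟙 A →
    IsIso (Limits.biprod.desc (F.map i) (F.map s))

/-!
The semi-split extension `B ↣ C_π ↠ CA`, `(c, d) ↦ c`, has a contractible quotient, so `F(CA) = 0`
and half-exactness make `F(κ_π)` a split epimorphism.

Injectivity rests on two steps of the Puppe sequence of a morphism `ρ : P → Q`. Half-exactness
for the mapping cylinder shows that a map into `F(P)` killed by `F(ρ)` factors through `F(ε_ρ)`;
applied to `ι_ρ : ΣQ → C_ρ`, together with a homotopy `ε_{ι_ρ} ≃ Σρ ∘ ξ`, this shows that a map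
into `F(ΣQ)` killed by `F(ι_ρ)` factors through `F(Σρ)`. Now let `u ≫ F(κ_π) = 0`. Then
`u ≫ F(i) = 0`, so `u = v ≫ F(ε_i)`. With `q̂ : C_i → ΣA`, `(g, b) ↦ π ∘ g ∘ (1 - ·)`, the homotopy
`κ_π ∘ ε_i ≃ ι_π ∘ q̂` gives `v ≫ F(q̂) ≫ F(ι_π) = 0`, hence
`v ≫ F(q̂) = c ≫ F(Σπ) = c ≫ F(λ) ≫ F(q̂)` for `λ : ΣD → C_i`, `h ↦ (h ∘ (1 - ·), 0)`. The
kernel `CB` of `q̂` is contractible, so `F(q̂)` is monic and `v = c ≫ F(λ)`; as `ε_i ∘ λ = 0`,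
`u = 0`.
-/

open CategoryTheory Limits

@[fun_prop] lemma BanAlg.continuous_hom {P Q : BanAlg} (f : P ⟶ Q) : Continuous f.1 := f.2

section Interval

def projI (r : ℝ) : unitInterval := Set.projIcc 0 1 zero_le_one r

@[fun_prop] lemma continuous_projI : Continuous projI := continuous_projIcc (h := zero_le_one)

@[simp] lemma projI_coe (t : unitInterval) : projI t = t := Set.projIcc_val _ t

lemma projI_of_one_le {r : ℝ} (h : 1 ≤ r) : projI r = 1 := Set.projIcc_of_right_le _ h

@[simp] lemma projI_zero : projI 0 = 0 := Set.projIcc_of_le_left _ le_rfl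

@[simp] lemma projI_one : projI 1 = 1 := projI_of_one_le le_rfl

@[simp] lemma projI_one_sub (t : unitInterval) : projI (1 - t) = unitInterval.symm t := by
  rw [← unitInterval.coe_symm_eq, projI_coe]

end Interval

lemma nalgHomotopic_of_continuous {A B : Type} [NonUnitalNonAssocSemiring A] [Module ℂ A]
    [TopologicalSpace A] [NonUnitalNonAssocSemiring B] [Module ℂ B] [TopologicalSpace B]
    [IsTopologicalSemiring B] [ContinuousConstSMul ℂ B] {φ ψ : A →ₙₐ[ℂ] B}
    (H : unitInterval → A →ₙₐ[ℂ] B) (hH : Continuous fun p : A × unitInterval => H p.2 p.1)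
    (h₀ : ∀ x, H 0 x = φ x) (h₁ : ∀ x, H 1 x = ψ x) : NAlgHomotopic φ ψ := by
  refine ⟨{ toFun x := ⟨fun s => H s x, hH.comp (continuous_const.prodMk continuous_id)⟩
            map_smul' c x := by ext; simp
            map_zero' := by ext; simp
            map_add' x y := by ext; simp
            map_mul' x y := by ext; simp }, ?_, h₀, h₁⟩
  exact ContinuousMap.continuous_of_continuous_uncurry _ hH

lemma exists_continuousMap_lift {X E F : Type*} [TopologicalSpace X] [TopologicalSpace E]
    [TopologicalSpace F] {e : E → F} (he : Topology.IsEmbedding e) (g : C(X, F))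
    (hg : ∀ x, g x ∈ Set.range e) : ∃ β : C(X, E), ∀ x, e (β x) = g x := by
  choose β hβ using hg
  exact ⟨⟨β, he.continuous_iff.mpr (by simpa [Function.comp_def, hβ] using g.continuous)⟩, hβ⟩

lemma IsExtensionHom.isEmbedding {B D A : BanAlg} {i : B ⟶ D} {π : D ⟶ A}
    (hext : IsExtensionHom i π) : Topology.IsEmbedding i.1 :=
  let iL : B →L[ℂ] D := ⟨(i.1 : B →ₗ[ℂ] D), i.2⟩
  have ⟨_, hK⟩ := iL.antilipschitz_of_injective_of_isClosed_range hext.inj hext.closedRange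
  hK.isEmbedding i.2

lemma IsExtensionHom.apply_apply_eq_zero {B D A : BanAlg} {i : B ⟶ D} {π : D ⟶ A}
    (hext : IsExtensionHom i π) (b : B) : π.1 (i.1 b) = 0 :=
  (hext.exact ▸ Set.mem_range_self b : i.1 b ∈ {d | π.1 d = 0})

lemma IsSemiSplit.surjective {D A : BanAlg} {π : D ⟶ A} (hss : IsSemiSplit π) :
    Function.Surjective π.1 :=
  fun a => ⟨hss.choose a, hss.choose_spec a⟩

def zeroObj : BanAlg := BanAlg.of PUnit

def BanAlg.zeroHom (P Q : BanAlg) : P ⟶ Q := ⟨0, continuous_const⟩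

lemma isExtensionHom_zeroHom_id (Q : BanAlg) :
    IsExtensionHom (BanAlg.zeroHom zeroObj Q) (𝟙 Q) where
  inj a b _ := Subsingleton.elim (α := PUnit) a b
  closedRange := by
    rw [show Set.range (BanAlg.zeroHom zeroObj Q).1 = {0} from Set.range_const]
    exact isClosed_singleton
  surj := Function.surjective_id
  exact := Set.range_const

def BanAlg.Contractible (P : BanAlg) : Prop :=
  NAlgHomotopic (𝟙 P : P ⟶ P).1 (BanAlg.zeroHom P P).1

def coneAlgObj (A : BanAlg) : BanAlg :=
  BanAlg.ofSubalg (vanishAlg unitInterval A {1}) (isClosed_vanishAlg _)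

def coneContraction (A : BanAlg) (s : unitInterval) : coneAlgObj A →ₙₐ[ℂ] coneAlgObj A where
  toFun f := ⟨f.1.comp ⟨fun t => projI (t + s * (1 - t)), by fun_prop⟩, by
    rintro _ rfl; simpa using f.2 1 rfl⟩
  map_smul' _ _ := rfl
  map_zero' := rfl
  map_add' _ _ := rfl
  map_mul' _ _ := rfl

lemma contractible_coneAlgObj (A : BanAlg) : (coneAlgObj A).Contractible := by
  refine nalgHomotopic_of_continuous (coneContraction A) ?_ (fun f => ?_) (fun f => ?_)
  · refine Continuous.subtype_mk (ContinuousMap.continuous_of_continuous_uncurry _ ?_) _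
    show Continuous fun p : (coneAlgObj A × unitInterval) × unitInterval =>
      p.1.1.1 (projI (p.2 + p.1.2 * (1 - p.2)))
    fun_prop
  · exact Subtype.ext <| ContinuousMap.ext fun t =>
      show f.1 (projI (t + 0 * (1 - t))) = f.1 t by simp
  · exact Subtype.ext <| ContinuousMap.ext fun t =>
      show f.1 (projI (t + 1 * (1 - t))) = 0 by simpa using f.2 1 rfl

def coneEpsHom {P Q : BanAlg} (ρ : P ⟶ Q) : coneObj ρ ⟶ P :=
  ⟨coneEps ρ.1, continuous_coneEps ρ.1⟩

@[simp] lemma coneIotaHom_apply {P Q : BanAlg} (ρ : P ⟶ Q) (f : suspObj Q) :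
    ((coneIotaHom ρ).1 f).1 = (f.1, 0) :=
  rfl

section Cylinder

variable {P Q : BanAlg} (ρ : P ⟶ Q)

def cylAlg : NonUnitalSubalgebra ℂ (C(unitInterval, Q) × P) where
  carrier := {p | p.1 0 = ρ.1 p.2}
  add_mem' hp hq := by simp_all
  zero_mem' := by simp
  mul_mem' hp hq := by simp_all
  smul_mem' c p hp := by simp_all

def cylObj : BanAlg :=
  BanAlg.ofSubalg (cylAlg ρ) (isClosed_eq (by fun_prop) (by fun_prop))

def cylIncl : coneObj ρ ⟶ cylObj ρ :=
  ⟨{ toFun x := ⟨x.1, x.2.2⟩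
     map_smul' _ _ := rfl
     map_zero' := rfl
     map_add' _ _ := rfl
     map_mul' _ _ := rfl }, continuous_subtype_val.subtype_mk _⟩

def cylEv : cylObj ρ ⟶ Q :=
  ⟨{ toFun p := p.1.1 1
     map_smul' _ _ := rfl
     map_zero' := rfl
     map_add' _ _ := rfl
     map_mul' _ _ := rfl },
   (continuous_eval_const 1).comp (continuous_fst.comp continuous_subtype_val)⟩

def cylIn : P ⟶ cylObj ρ :=
  ⟨{ toFun p := ⟨(ContinuousMap.const _ (ρ.1 p), p), rfl⟩
     map_smul' c p := Subtype.ext <| Prod.ext (ContinuousMap.ext fun _ => map_smul ρ.1 c p) rfl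
     map_zero' := Subtype.ext <| Prod.ext (ContinuousMap.ext fun _ => map_zero ρ.1) rfl
     map_add' p q := Subtype.ext <| Prod.ext (ContinuousMap.ext fun _ => map_add ρ.1 p q) rfl
     map_mul' p q := Subtype.ext <| Prod.ext (ContinuousMap.ext fun _ => map_mul ρ.1 p q) rfl },
   Continuous.subtype_mk ((ContinuousMap.continuous_const'.comp ρ.2).prodMk continuous_id) _⟩

def cylPr : cylObj ρ ⟶ P :=
  ⟨{ toFun p := p.1.2
     map_smul' _ _ := rfl
     map_zero' := rfl
     map_add' _ _ := rfl
     map_mul' _ _ := rfl }, continuous_snd.comp continuous_subtype_val⟩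

lemma cylIncl_cylPr : cylIncl ρ ≫ cylPr ρ = coneEpsHom ρ := rfl

lemma cylIn_cylPr : cylIn ρ ≫ cylPr ρ = 𝟙 P := rfl

lemma cylIn_cylEv : cylIn ρ ≫ cylEv ρ = ρ := rfl

def cylEvSection : Q →L[ℂ] cylObj ρ where
  toFun a := ⟨(⟨fun t => (t : ℂ) • a, by fun_prop⟩, 0),
    show (((0 : unitInterval) : ℝ) : ℂ) • a = ρ.1 0 by simp⟩
  map_add' a b := Subtype.ext <| Prod.ext (ContinuousMap.ext fun _ => smul_add _ a b)
    (add_zero 0).symm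
  map_smul' c a := Subtype.ext <| Prod.ext (ContinuousMap.ext fun _ => smul_comm _ c a)
    (smul_zero c).symm
  cont := by
    refine Continuous.subtype_mk (Continuous.prodMk ?_ continuous_const) _
    refine ContinuousMap.continuous_of_continuous_uncurry _ ?_
    show Continuous fun p : Q × unitInterval => ((p.2 : ℝ) : ℂ) • p.1
    fun_prop

lemma isSemiSplit_cylEv : IsSemiSplit (cylEv ρ) :=
  ⟨cylEvSection ρ, fun a => show ((1 : ℝ) : ℂ) • a = a by simp⟩

lemma range_cylIncl : Set.range (cylIncl ρ).1 = {p : cylObj ρ | p.1.1 1 = 0} := by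
  ext p
  refine ⟨?_, fun hp => ⟨⟨p.1, hp, p.2⟩, rfl⟩⟩
  rintro ⟨x, rfl⟩
  exact x.2.1

lemma isExtensionHom_cylIncl_cylEv : IsExtensionHom (cylIncl ρ) (cylEv ρ) where
  inj _ _ h := Subtype.ext (congrArg Subtype.val h :)
  closedRange := by rw [range_cylIncl]; exact isClosed_eq (by fun_prop) continuous_const
  surj := (isSemiSplit_cylEv ρ).surjective
  exact := range_cylIncl ρ

end Cylinder

section Puppe

variable {P Q : BanAlg} (ρ : P ⟶ Q)

def coneIotaToSusp : coneObj (coneIotaHom ρ) ⟶ suspObj P :=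
  ⟨{ toFun x := ⟨⟨fun y => (x.1.1 (projI (2 * y))).1.2, by fun_prop⟩, by
       rintro y (rfl | rfl)
       · simp [x.2.2]
       · simp only [ContinuousMap.coe_mk, Set.Icc.coe_one, mul_one,
           projI_of_one_le (by norm_num : (1 : ℝ) ≤ 2), x.2.1]
         rfl⟩
     map_smul' _ _ := rfl
     map_zero' := rfl
     map_add' _ _ := rfl
     map_mul' _ _ := rfl }, by
   refine Continuous.subtype_mk (ContinuousMap.continuous_of_continuous_uncurry _ ?_) _
   show Continuous fun p : coneObj (coneIotaHom ρ) × unitInterval =>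
     (p.1.1.1 (projI (2 * p.2))).1.2
   fun_prop⟩

/- For `x = (γ, h)`, the value at `s = 1` and `y` is `γ(min(2y,1))(max(2y-1,0))`, that is
`ρ(γ(2y).2)` on `[0, 1/2]` and `0` on `[1/2, 1]`. -/
def coneIotaHomotopy (s : unitInterval) : coneObj (coneIotaHom ρ) →ₙₐ[ℂ] suspObj Q where
  toFun x := ⟨⟨fun y => (x.1.1 (projI (s * min (2 * (y : ℝ)) 1))).1.1
      (projI ((1 - (s : ℝ)) * y + s * max (2 * (y : ℝ) - 1) 0)), by fun_prop⟩, by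
    rintro y (rfl | rfl)
    · simpa [x.2.2] using susp_apply_zero x.1.2
    · simpa [sub_add_cancel, show (2 : ℝ) - 1 = 1 by norm_num] using (x.1.1 s).2.1⟩
  map_smul' _ _ := rfl
  map_zero' := rfl
  map_add' _ _ := rfl
  map_mul' _ _ := rfl

lemma nalgHomotopic_coneEps_coneIota :
    NAlgHomotopic (coneEpsHom (coneIotaHom ρ)).1 (coneIotaToSusp ρ ≫ suspHom ρ).1 := by
  refine nalgHomotopic_of_continuous (coneIotaHomotopy ρ) ?_ (fun x => ?_) (fun x => ?_)
  · refine Continuous.subtype_mk (ContinuousMap.continuous_of_continuous_uncurry _ ?_) _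
    show Continuous fun p : (coneObj (coneIotaHom ρ) × unitInterval) × unitInterval =>
      (p.1.1.1.1 (projI (p.1.2 * min (2 * (p.2 : ℝ)) 1))).1.1
        (projI ((1 - (p.1.2 : ℝ)) * p.2 + p.1.2 * max (2 * (p.2 : ℝ) - 1) 0))
    fun_prop
  · refine Subtype.ext <| ContinuousMap.ext fun y => ?_
    show (x.1.1 (projI (0 * min (2 * (y : ℝ)) 1))).1.1
        (projI ((1 - 0) * (y : ℝ) + 0 * max (2 * (y : ℝ) - 1) 0)) = x.1.2.1 y
    simp [x.2.2]
  · refine Subtype.ext <| ContinuousMap.ext fun y => ?_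
    show (x.1.1 (projI (1 * min (2 * (y : ℝ)) 1))).1.1
        (projI ((1 - 1) * (y : ℝ) + 1 * max (2 * (y : ℝ) - 1) 0))
      = ρ.1 (x.1.1 (projI (2 * y))).1.2
    rcases le_total (2 * (y : ℝ)) 1 with hy | hy
    · rw [one_mul, min_eq_left hy, max_eq_right (by linarith)]
      simpa using (x.1.1 (projI (2 * y))).2.2
    · rw [one_mul, min_eq_right hy, projI_one, projI_of_one_le hy, x.2.1]
      exact (map_zero ρ.1).symm

end Puppe

def coneFstHom {D A : BanAlg} (π : D ⟶ A) : coneObj π ⟶ coneAlgObj A :=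
  ⟨{ toFun x := ⟨x.1.1, by rintro _ rfl; exact x.2.1⟩
     map_smul' _ _ := rfl
     map_zero' := rfl
     map_add' _ _ := rfl
     map_mul' _ _ := rfl }, (continuous_fst.comp continuous_subtype_val).subtype_mk _⟩

section ExtensionMaps

variable {B D A : BanAlg} (i : B ⟶ D) (π : D ⟶ A)

/- Reversing the path is what makes `κ_π ∘ ε_i` homotopic to `ι_π ∘ q̂`
(`nalgHomotopic_coneEps_coneKappa`). -/
def coneSuspQuot (hext : IsExtensionHom i π) : coneObj i ⟶ suspObj A :=
  ⟨{ toFun x := ⟨⟨fun t => π.1 (x.1.1 (unitInterval.symm t)), by fun_prop⟩, by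
       rintro _ (rfl | rfl)
       · simp [x.2.1]
       · simpa [x.2.2] using hext.apply_apply_eq_zero x.1.2⟩
     map_smul' c _ := Subtype.ext <| ContinuousMap.ext fun _ => map_smul π.1 c _
     map_zero' := Subtype.ext <| ContinuousMap.ext fun _ => map_zero π.1
     map_add' _ _ := Subtype.ext <| ContinuousMap.ext fun _ => map_add π.1 _ _
     map_mul' _ _ := Subtype.ext <| ContinuousMap.ext fun _ => map_mul π.1 _ _ }, by
   refine Continuous.subtype_mk (ContinuousMap.continuous_of_continuous_uncurry _ ?_) _
   show Continuous fun p : coneObj i × unitInterval => π.1 (p.1.1.1 (unitInterval.symm p.2))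
   fun_prop⟩

def coneAlgToCone : coneAlgObj B ⟶ coneObj i :=
  ⟨{ toFun β := ⟨(postcompHom i.1 i.2 β.1, β.1 0), by simp [β.2 1 rfl], rfl⟩
     map_smul' c β := Subtype.ext <| Prod.ext (map_smul (postcompHom i.1 i.2) c β.1) rfl
     map_zero' := Subtype.ext <| Prod.ext (map_zero (postcompHom i.1 i.2)) rfl
     map_add' β γ := Subtype.ext <| Prod.ext (map_add (postcompHom i.1 i.2) β.1 γ.1) rfl
     map_mul' β γ := Subtype.ext <| Prod.ext (map_mul (postcompHom i.1 i.2) β.1 γ.1) rfl },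
   (((ContinuousMap.continuous_postcomp _).comp continuous_subtype_val).prodMk
      ((continuous_eval_const 0).comp continuous_subtype_val)).subtype_mk _⟩

def suspToCone : suspObj D ⟶ coneObj i :=
  ⟨{ toFun h := ⟨(⟨fun t => h.1 (unitInterval.symm t), by fun_prop⟩, 0),
       by simpa using susp_apply_zero h, by simpa using susp_apply_one h⟩
     map_smul' c _ := Subtype.ext <| Prod.ext rfl (smul_zero c).symm
     map_zero' := rfl
     map_add' _ _ := Subtype.ext <| Prod.ext rfl (add_zero 0).symm
     map_mul' _ _ := Subtype.ext <| Prod.ext rfl (mul_zero 0).symm }, by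
   refine Continuous.subtype_mk (Continuous.prodMk ?_ continuous_const) _
   refine ContinuousMap.continuous_of_continuous_uncurry _ ?_
   show Continuous fun p : suspObj D × unitInterval => p.1.1 (unitInterval.symm p.2)
   fun_prop⟩

end ExtensionMaps

section ExtensionLemmas

variable {B D A : BanAlg} {i : B ⟶ D} {π : D ⟶ A}

lemma isSemiSplit_coneFstHom (hss : IsSemiSplit π) : IsSemiSplit (coneFstHom π) := by
  obtain ⟨s, hs⟩ := hss
  refine ⟨{ toFun f := ⟨(f.1, s (f.1 0)), f.2 1 rfl, (hs _).symm⟩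
            map_add' f g := Subtype.ext <| Prod.ext rfl (map_add s _ _)
            map_smul' c f := Subtype.ext <| Prod.ext rfl (map_smul s _ _)
            cont := ?_ }, fun f => rfl⟩
  exact (continuous_subtype_val.prodMk
    (s.continuous.comp ((continuous_eval_const 0).comp continuous_subtype_val))).subtype_mk _

lemma range_coneKappaHom (hext : IsExtensionHom i π) :
    Set.range (coneKappaHom i π hext).1 = {x : coneObj π | x.1.1 = 0} := by
  ext x
  refine ⟨by rintro ⟨b, rfl⟩; rfl, fun (hx : x.1.1 = 0) => ?_⟩
  have hπ : π.1 x.1.2 = 0 := by rw [← x.2.2, hx]; rfl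
  obtain ⟨b, hb⟩ : x.1.2 ∈ Set.range i.1 := hext.exact ▸ hπ
  exact ⟨b, Subtype.ext (Prod.ext hx.symm hb)⟩

lemma isExtensionHom_coneKappaHom_coneFstHom (hext : IsExtensionHom i π) :
    IsExtensionHom (coneKappaHom i π hext) (coneFstHom π) where
  inj _ _ h := hext.inj (congrArg (fun x : coneObj π => x.1.2) h)
  closedRange := by
    rw [range_coneKappaHom]
    exact isClosed_eq (continuous_fst.comp continuous_subtype_val) continuous_const
  surj f := by
    obtain ⟨d, hd⟩ := hext.surj (f.1 0)
    exact ⟨⟨(f.1, d), f.2 1 rfl, hd.symm⟩, rfl⟩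
  exact := by
    rw [range_coneKappaHom]
    ext x
    exact ⟨fun h => Subtype.ext h, fun h => congrArg Subtype.val h⟩

def coneSuspQuotSection (s : A →L[ℂ] D) : suspObj A →L[ℂ] coneObj i where
  toFun h := ⟨(⟨fun t => s (h.1 (unitInterval.symm t)), by fun_prop⟩, 0),
    by simp [susp_apply_zero h], by simp [susp_apply_one h]⟩
  map_add' _ _ := Subtype.ext <|
    Prod.ext (ContinuousMap.ext fun _ => map_add s _ _) (add_zero 0).symm
  map_smul' c _ := Subtype.ext <|
    Prod.ext (ContinuousMap.ext fun _ => map_smul s c _) (smul_zero c).symm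
  cont := by
    refine Continuous.subtype_mk (Continuous.prodMk ?_ continuous_const) _
    refine ContinuousMap.continuous_of_continuous_uncurry _ ?_
    show Continuous fun p : suspObj A × unitInterval => s (p.1.1 (unitInterval.symm p.2))
    fun_prop

lemma isSemiSplit_coneSuspQuot (hext : IsExtensionHom i π) (hss : IsSemiSplit π) :
    IsSemiSplit (coneSuspQuot i π hext) := by
  obtain ⟨s, hs⟩ := hss
  refine ⟨coneSuspQuotSection s, fun h => Subtype.ext <| ContinuousMap.ext fun t => ?_⟩
  show π.1 (s (h.1 (unitInterval.symm (unitInterval.symm t)))) = h.1 t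
  rw [unitInterval.symm_symm, hs]

lemma range_coneAlgToCone (hext : IsExtensionHom i π) :
    Set.range (coneAlgToCone i).1 = {x : coneObj i | ∀ t, π.1 (x.1.1 t) = 0} := by
  ext x
  refine ⟨by rintro ⟨β, rfl⟩ t; exact hext.apply_apply_eq_zero _, fun hx => ?_⟩
  obtain ⟨β, hβ⟩ := exists_continuousMap_lift hext.isEmbedding x.1.1
    fun t => hext.exact ▸ hx t
  have hβ₁ : β 1 = 0 := hext.inj (by rw [hβ, x.2.1, map_zero])
  exact ⟨⟨β, by rintro _ rfl; exact hβ₁⟩,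
    Subtype.ext <| Prod.ext (ContinuousMap.ext hβ) (hext.inj ((hβ 0).trans x.2.2))⟩

lemma isExtensionHom_coneAlgToCone_coneSuspQuot (hext : IsExtensionHom i π)
    (hss : IsSemiSplit π) : IsExtensionHom (coneAlgToCone i) (coneSuspQuot i π hext) where
  inj β γ h := Subtype.ext <| ContinuousMap.ext fun t =>
    hext.inj (congrArg (fun x : coneObj i => x.1.1 t) h)
  closedRange := by
    rw [range_coneAlgToCone hext, Set.ofPred_forall]
    exact isClosed_iInter fun t => isClosed_eq (by fun_prop) continuous_const
  surj := (isSemiSplit_coneSuspQuot hext hss).surjective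
  exact := by
    rw [range_coneAlgToCone hext]
    ext x
    refine ⟨fun hx => Subtype.ext <| ContinuousMap.ext fun t => hx _, fun hx t => ?_⟩
    have h : π.1 (x.1.1 (unitInterval.symm (unitInterval.symm t))) = 0 :=
      congrArg (fun h : suspObj A => h.1 (unitInterval.symm t)) hx
    rwa [unitInterval.symm_symm] at h

def coneKappaHomotopy (hext : IsExtensionHom i π) (s : unitInterval) :
    coneObj i →ₙₐ[ℂ] coneObj π where
  toFun x := ⟨(⟨fun t => π.1 (x.1.1 (projI (s * (1 - t)))), by fun_prop⟩, x.1.1 s),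
    by simpa [x.2.2] using hext.apply_apply_eq_zero x.1.2, by simp⟩
  map_smul' c _ := Subtype.ext <| Prod.ext (ContinuousMap.ext fun _ => map_smul π.1 c _) rfl
  map_zero' := Subtype.ext <| Prod.ext (ContinuousMap.ext fun _ => map_zero π.1) rfl
  map_add' _ _ := Subtype.ext <| Prod.ext (ContinuousMap.ext fun _ => map_add π.1 _ _) rfl
  map_mul' _ _ := Subtype.ext <| Prod.ext (ContinuousMap.ext fun _ => map_mul π.1 _ _) rfl

lemma nalgHomotopic_coneEps_coneKappa (hext : IsExtensionHom i π) :
    NAlgHomotopic (coneEpsHom i ≫ coneKappaHom i π hext).1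
      (coneSuspQuot i π hext ≫ coneIotaHom π).1 := by
  refine nalgHomotopic_of_continuous (coneKappaHomotopy hext) ?_ (fun x => ?_) (fun x => ?_)
  · refine Continuous.subtype_mk (Continuous.prodMk ?_ ?_) _
    · refine ContinuousMap.continuous_of_continuous_uncurry _ ?_
      show Continuous fun p : (coneObj i × unitInterval) × unitInterval =>
        π.1 (p.1.1.1.1 (projI (p.1.2 * (1 - p.2))))
      fun_prop
    · show Continuous fun p : coneObj i × unitInterval => p.1.1.1 p.2
      fun_prop
  · refine Subtype.ext <| Prod.ext (ContinuousMap.ext fun t => ?_) x.2.2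
    show π.1 (x.1.1 (projI (0 * (1 - t)))) = 0
    simpa [x.2.2] using hext.apply_apply_eq_zero x.1.2
  · refine Subtype.ext <| Prod.ext (ContinuousMap.ext fun t => ?_) x.2.1
    show π.1 (x.1.1 (projI (1 * (1 - t)))) = π.1 (x.1.1 (unitInterval.symm t))
    rw [one_mul, projI_one_sub]

lemma suspToCone_coneSuspQuot (hext : IsExtensionHom i π) :
    suspToCone i ≫ coneSuspQuot i π hext = suspHom π :=
  Subtype.ext <| NonUnitalAlgHom.ext fun h => Subtype.ext <| ContinuousMap.ext fun t =>
    congrArg (fun t => π.1 (h.1 t)) (unitInterval.symm_symm t)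

lemma suspToCone_coneEps : suspToCone i ≫ coneEpsHom i = BanAlg.zeroHom _ _ := rfl

lemma coneKappaHom_coneEps (hext : IsExtensionHom i π) :
    coneKappaHom i π hext ≫ coneEpsHom π = i := rfl

end ExtensionLemmas

namespace HalfExactFunctor

variable {𝒞 : Type*} [Category 𝒞] [Preadditive 𝒞] {F : BanAlg ⥤ 𝒞} {P Q B D A : BanAlg}
  {i : B ⟶ D} {π : D ⟶ A}

lemma exists_comp_eq_of_comp_eq_zero (hF : HalfExactFunctor F) (hext : IsExtensionHom i π)
    (hss : IsSemiSplit π) {X : 𝒞} (u : X ⟶ F.obj D) (hu : u ≫ F.map π = 0) :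
    ∃ t : X ⟶ F.obj B, t ≫ F.map i = u :=
  ((hF B D A i π hext hss X).1 u).mp hu

lemma map_zeroHom (hF : HalfExactFunctor F) (P Q : BanAlg) :
    F.map (BanAlg.zeroHom P Q) = 0 := by
  have hzero : F.map (BanAlg.zeroHom zeroObj Q) = 0 := by
    simpa using ((hF _ _ _ _ _ (isExtensionHom_zeroHom_id Q)
      ⟨ContinuousLinearMap.id ℂ Q, fun _ => rfl⟩ (F.obj zeroObj)).1
        (F.map (BanAlg.zeroHom zeroObj Q))).mpr ⟨𝟙 _, Category.id_comp _⟩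
  rw [show BanAlg.zeroHom P Q = BanAlg.zeroHom P zeroObj ≫ BanAlg.zeroHom zeroObj Q from rfl,
    F.map_comp, hzero, comp_zero]

lemma isZero_obj_of_contractible (hF : HalfExactFunctor F) (hH : HomotopyInvariant F)
    (hP : P.Contractible) : IsZero (F.obj P) := by
  rw [IsZero.iff_id_eq_zero, ← F.map_id, hH P P _ _ hP, hF.map_zeroHom]

lemma exists_comp_coneEps_eq (hF : HalfExactFunctor F) (ρ : P ⟶ Q) {X : 𝒞}
    (u : X ⟶ F.obj P) (hu : u ≫ F.map ρ = 0) :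
    ∃ t : X ⟶ F.obj (coneObj ρ), t ≫ F.map (coneEpsHom ρ) = u := by
  obtain ⟨t, ht⟩ := hF.exists_comp_eq_of_comp_eq_zero (isExtensionHom_cylIncl_cylEv ρ)
    (isSemiSplit_cylEv ρ) (u ≫ F.map (cylIn ρ))
    (by rw [Category.assoc, ← F.map_comp, cylIn_cylEv, hu])
  refine ⟨t, ?_⟩
  rw [← cylIncl_cylPr, F.map_comp, ← Category.assoc, ht, Category.assoc, ← F.map_comp,
    cylIn_cylPr, F.map_id, Category.comp_id]

lemma exists_comp_suspHom_eq (hF : HalfExactFunctor F) (hH : HomotopyInvariant F)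
    (ρ : P ⟶ Q) {X : 𝒞} (u : X ⟶ F.obj (suspObj Q)) (hu : u ≫ F.map (coneIotaHom ρ) = 0) :
    ∃ t : X ⟶ F.obj (suspObj P), t ≫ F.map (suspHom ρ) = u := by
  obtain ⟨c, hc⟩ := hF.exists_comp_coneEps_eq (coneIotaHom ρ) u hu
  have hθ : F.map (coneEpsHom (coneIotaHom ρ)) = F.map (coneIotaToSusp ρ ≫ suspHom ρ) :=
    hH _ _ _ _ (nalgHomotopic_coneEps_coneIota ρ)
  exact ⟨c ≫ F.map (coneIotaToSusp ρ), by rw [Category.assoc, ← F.map_comp, ← hθ, hc]⟩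

lemma isSplitEpi_map_coneKappaHom (hF : HalfExactFunctor F) (hH : HomotopyInvariant F)
    (hext : IsExtensionHom i π) (hss : IsSemiSplit π) :
    IsSplitEpi (F.map (coneKappaHom i π hext)) := by
  obtain ⟨w, hw⟩ := hF.exists_comp_eq_of_comp_eq_zero
    (isExtensionHom_coneKappaHom_coneFstHom hext) (isSemiSplit_coneFstHom hss) (𝟙 _)
    ((hF.isZero_obj_of_contractible hH (contractible_coneAlgObj A)).eq_of_tgt _ _)
  exact ⟨⟨w, hw⟩⟩

lemma mono_map_coneSuspQuot (hF : HalfExactFunctor F) (hH : HomotopyInvariant F)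
    (hext : IsExtensionHom i π) (hss : IsSemiSplit π) :
    Mono (F.map (coneSuspQuot i π hext)) := by
  refine Preadditive.mono_of_cancel_zero _ fun u hu => ?_
  obtain ⟨t, rfl⟩ := hF.exists_comp_eq_of_comp_eq_zero
    (isExtensionHom_coneAlgToCone_coneSuspQuot hext hss) (isSemiSplit_coneSuspQuot hext hss) u hu
  rw [(hF.isZero_obj_of_contractible hH (contractible_coneAlgObj B)).eq_of_tgt t 0, zero_comp]

lemma mono_map_coneKappaHom (hF : HalfExactFunctor F) (hH : HomotopyInvariant F)
    (hext : IsExtensionHom i π) (hss : IsSemiSplit π) :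
    Mono (F.map (coneKappaHom i π hext)) := by
  have := hF.mono_map_coneSuspQuot hH hext hss
  refine Preadditive.mono_of_cancel_zero _ fun u hu => ?_
  obtain ⟨v, rfl⟩ := hF.exists_comp_coneEps_eq i u <| by
    rw [← coneKappaHom_coneEps hext, F.map_comp, ← Category.assoc, hu, zero_comp]
  have hΦ : F.map (coneEpsHom i ≫ coneKappaHom i π hext) =
      F.map (coneSuspQuot i π hext ≫ coneIotaHom π) :=
    hH _ _ _ _ (nalgHomotopic_coneEps_coneKappa hext)
  obtain ⟨c, hc⟩ := hF.exists_comp_suspHom_eq hH π (v ≫ F.map (coneSuspQuot i π hext)) <| by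
    rw [Category.assoc, ← F.map_comp, ← hΦ, F.map_comp, ← Category.assoc, hu]
  have hv : v = c ≫ F.map (suspToCone i) := by
    rw [← cancel_mono (F.map (coneSuspQuot i π hext)), ← hc, Category.assoc, ← F.map_comp,
      suspToCone_coneSuspQuot]
  rw [hv, Category.assoc, ← F.map_comp, suspToCone_coneEps, hF.map_zeroHom, comp_zero]

end HalfExactFunctor

theorem kappa_iso_of_halfexact_homotopyInvariant_general
    {𝒞 : Type*} [Category 𝒞] [Preadditive 𝒞]
    (F : BanAlg ⥤ 𝒞)
    (hhtp : HomotopyInvariant F) (hhe : HalfExactFunctor F)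
    (B D A : BanAlg) (i : B ⟶ D) (π : D ⟶ A)
    (hext : IsExtensionHom i π) (hss : IsSemiSplit π) :
    IsIso (F.map (coneKappaHom i π hext)) := by
  have := hhe.isSplitEpi_map_coneKappaHom hhtp hext hss
  have := hhe.mono_map_coneKappaHom hhtp hext hss
  exact isIso_of_mono_of_isSplitEpi _

theorem kappa_iso_of_halfexact_homotopyInvariant
    {𝒞 : Type*} [Category 𝒞] [Preadditive 𝒞] [Limits.HasBinaryBiproducts 𝒞]
    (F : BanAlg ⥤ 𝒞)
    (hhtp : HomotopyInvariant F) (hhe : HalfExactFunctor F)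
    (B D A : BanAlg) (i : B ⟶ D) (π : D ⟶ A)
    (hext : IsExtensionHom i π) (hss : IsSemiSplit π) :
    IsIso (F.map (coneKappaHom i π hext)) :=
  kappa_iso_of_halfexact_homotopyInvariant_general F hhtp hhe B D A i π hext hss
end
end
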